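/- arXiv:1504.05996 — 3 statements merged into one kernel-verified Lean document; each statement's English description precedes it below -/
import Mathlib

section
/- Let n ≥ 1, let a_1,…,a_n and b_1,…,b_n be positive real numbers, let p_0 ∈ [0,1], and define recursively p_j = a_j·p_{j−1} / (a_j·p_{j−1} + b_j·(1−p_{j−1})) for 1 ≤ j ≤ n. Then p_n·(1−p_n) ≥ p_0·(1−p_0)·exp(−∑_{j=1}^n |ln(a_j/b_j)|). -/
/-!
A Bayes update `q = a p / D` with `D = a p + b (1 - p)` gives `1 - q = b (1 - p) / D`, so
`q (1 - q) = p (1 - p) · a b / D²`. As a convex combination of `a` and `b`, `D ≤ max a b`, whence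
`a b / D² ≥ min a b / max a b = exp (-|log (a / b)|)`. Multiplying these one-step contraction factors
along the recursion gives the bound.
-/

open Real Finset

lemma Real.exp_neg_abs_log_div {a b : ℝ} (ha : 0 < a) (hb : 0 < b) :
    exp (-|log (a / b)|) = min a b / max a b := by
  rcases le_total a b with h | h
  · have hlog : log (a / b) ≤ 0 := log_nonpos (by positivity) ((div_le_one hb).2 h)
    rw [min_eq_left h, max_eq_right h, abs_of_nonpos hlog, neg_neg, exp_log (by positivity)]
  · have hlog : 0 ≤ log (a / b) := log_nonneg ((one_le_div hb).2 h)
    rw [min_eq_right h, max_eq_left h, abs_of_nonneg hlog, ← log_inv, exp_log (by positivity),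
      inv_div]

lemma convex_combo_le_max {a b p : ℝ} (hp : p ∈ Set.Icc (0 : ℝ) 1) :
    a * p + b * (1 - p) ≤ max a b := by
  obtain ⟨hp0, hp1⟩ := hp
  nlinarith [le_max_left a b, le_max_right a b]

lemma min_le_convex_combo {a b p : ℝ} (hp : p ∈ Set.Icc (0 : ℝ) 1) :
    min a b ≤ a * p + b * (1 - p) := by
  obtain ⟨hp0, hp1⟩ := hp
  nlinarith [min_le_left a b, min_le_right a b]

/-- The posterior probability of bit value `1` after observing an output with likelihoods
`a` (under `1`) and `b` (under `0`), from the prior `p`. -/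
noncomputable def bayesUpdate (a b p : ℝ) : ℝ := a * p / (a * p + b * (1 - p))

section BayesUpdate

variable {a b p : ℝ}

lemma bayesUpdate_denom_pos (ha : 0 < a) (hb : 0 < b) (hp : p ∈ Set.Icc (0 : ℝ) 1) :
    0 < a * p + b * (1 - p) :=
  (lt_min ha hb).trans_le (min_le_convex_combo hp)

lemma bayesUpdate_mem_Icc (ha : 0 < a) (hb : 0 < b) (hp : p ∈ Set.Icc (0 : ℝ) 1) :
    bayesUpdate a b p ∈ Set.Icc (0 : ℝ) 1 := by
  have hD := bayesUpdate_denom_pos ha hb hp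
  obtain ⟨hp0, hp1⟩ := hp
  refine ⟨by unfold bayesUpdate; positivity, (div_le_one hD).2 ?_⟩
  nlinarith

lemma bayesUpdate_mul_one_sub (ha : 0 < a) (hb : 0 < b) (hp : p ∈ Set.Icc (0 : ℝ) 1) :
    bayesUpdate a b p * (1 - bayesUpdate a b p) =
      p * (1 - p) * (a * b / (a * p + b * (1 - p)) ^ 2) := by
  have hD := (bayesUpdate_denom_pos ha hb hp).ne'
  unfold bayesUpdate
  field_simp
  ring

lemma min_div_max_le_mul_div_sq (ha : 0 < a) (hb : 0 < b) (hp : p ∈ Set.Icc (0 : ℝ) 1) :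
    min a b / max a b ≤ a * b / (a * p + b * (1 - p)) ^ 2 := by
  have hD := bayesUpdate_denom_pos ha hb hp
  have hmax : 0 < max a b := ha.trans_le (le_max_left a b)
  calc min a b / max a b = a * b / max a b ^ 2 := by
        rw [← min_mul_max, sq, mul_div_mul_right _ _ hmax.ne']
    _ ≤ a * b / (a * p + b * (1 - p)) ^ 2 := by
        gcongr
        exact convex_combo_le_max hp

lemma mul_one_sub_le_bayesUpdate (ha : 0 < a) (hb : 0 < b) (hp : p ∈ Set.Icc (0 : ℝ) 1) :
    p * (1 - p) * exp (-|log (a / b)|) ≤ bayesUpdate a b p * (1 - bayesUpdate a b p) := by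
  have hvar : 0 ≤ p * (1 - p) := mul_nonneg hp.1 (sub_nonneg.2 hp.2)
  rw [bayesUpdate_mul_one_sub ha hb hp, exp_neg_abs_log_div ha hb]
  exact mul_le_mul_of_nonneg_left (min_div_max_le_mul_div_sq ha hb hp) hvar

end BayesUpdate

lemma mul_prod_Icc_le_of_mul_le {u c : ℕ → ℝ} {n : ℕ} (hc : ∀ j, 1 ≤ j → j ≤ n → 0 ≤ c j)
    (hstep : ∀ j, 1 ≤ j → j ≤ n → u (j - 1) * c j ≤ u j) :
    u 0 * ∏ j ∈ Icc 1 n, c j ≤ u n := by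
  induction n with
  | zero => simp
  | succ k ih =>
    have hk : 1 ≤ k + 1 := Nat.le_add_left 1 k
    rw [prod_Icc_succ_top hk, ← mul_assoc]
    calc (u 0 * ∏ j ∈ Icc 1 k, c j) * c (k + 1) ≤ u k * c (k + 1) :=
          mul_le_mul_of_nonneg_right
            (ih (fun j h1 h2 ↦ hc j h1 (by omega)) (fun j h1 h2 ↦ hstep j h1 (by omega)))
            (hc _ hk le_rfl)
      _ ≤ u (k + 1) := hstep _ hk le_rfl

lemma mem_Icc_of_bayesUpdate_rec {n : ℕ} {a b p : ℕ → ℝ}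
    (ha : ∀ j, 1 ≤ j → j ≤ n → 0 < a j) (hb : ∀ j, 1 ≤ j → j ≤ n → 0 < b j)
    (hp0 : p 0 ∈ Set.Icc (0 : ℝ) 1)
    (hrec : ∀ j, 1 ≤ j → j ≤ n → p j = bayesUpdate (a j) (b j) (p (j - 1))) :
    ∀ j ≤ n, p j ∈ Set.Icc (0 : ℝ) 1 := by
  intro j hj
  induction j with
  | zero => exact hp0
  | succ k ih =>
    rw [hrec _ (Nat.le_add_left 1 k) hj]
    exact bayesUpdate_mem_Icc (ha _ (Nat.le_add_left 1 k) hj) (hb _ (Nat.le_add_left 1 k) hj)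
      (ih (by omega))

theorem stmt_1_general (n : ℕ) (a b : ℕ → ℝ)
    (ha : ∀ j, 1 ≤ j → j ≤ n → 0 < a j) (hb : ∀ j, 1 ≤ j → j ≤ n → 0 < b j)
    (p : ℕ → ℝ) (hp0 : p 0 ∈ Set.Icc (0 : ℝ) 1)
    (hrec : ∀ j, 1 ≤ j → j ≤ n →
      p j = a j * p (j - 1) / (a j * p (j - 1) + b j * (1 - p (j - 1)))) :
    p n * (1 - p n)
      ≥ p 0 * (1 - p 0) * Real.exp (-(∑ j ∈ Finset.Icc 1 n, |Real.log (a j / b j)|)) := by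
  have hmem := mem_Icc_of_bayesUpdate_rec ha hb hp0 hrec
  rw [ge_iff_le, ← sum_neg_distrib, exp_sum]
  refine mul_prod_Icc_le_of_mul_le (u := fun j ↦ p j * (1 - p j)) (fun j _ _ ↦ (exp_pos _).le) fun j h1 h2 ↦ ?_
  rw [hrec j h1 h2]
  exact mul_one_sub_le_bayesUpdate (ha j h1 h2) (hb j h1 h2) (hmem _ (by omega))

/-- Iterated posterior-variance contraction bound: if `p_j` is obtained from `p_{j-1}` by a
Bayes update with positive likelihoods `a_j, b_j` for `1 ≤ j ≤ n`, then
`p_n·(1−p_n) ≥ p_0·(1−p_0)·exp(−∑_{j=1}^n |ln(a_j/b_j)|)`. -/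
theorem stmt_1 (n : ℕ) (hn : 1 ≤ n) (a b : ℕ → ℝ)
    (ha : ∀ j, 1 ≤ j → j ≤ n → 0 < a j) (hb : ∀ j, 1 ≤ j → j ≤ n → 0 < b j)
    (p : ℕ → ℝ) (hp0 : p 0 ∈ Set.Icc (0 : ℝ) 1)
    (hrec : ∀ j, 1 ≤ j → j ≤ n →
      p j = a j * p (j - 1) / (a j * p (j - 1) + b j * (1 - p (j - 1)))) :
    p n * (1 - p n)
      ≥ p 0 * (1 - p 0) * Real.exp (-(∑ j ∈ Finset.Icc 1 n, |Real.log (a j / b j)|)) :=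
  stmt_1_general n a b ha hb p hp0 hrec
end

section
/- Fix real constants c > 0 and b > 0. Define, for any map t : {1,2,…} → ℕ, U_c(t) = ∑_{k=1}^∞ 4^{−k}·exp(−t_k·c) and L_b(t) = (1/4)·∑_{k=1}^∞ 4^{−k}·exp(−t_k·b). For each n ≥ 1 let t^{(n)} be a transmission policy of length n (∑_{k≥1} t^{(n)}_k = n) that is efficient for c (U_c(t^{(n)}) ≤ U_c(t') for every transmission policy t' of length n). Then liminf_{n→∞} ln( L_b(t^{(n)}) ) / √n ≥ −√(2·c·ln 4). -/
/-- Upper bound on the end-to-end distortion of a transmission pattern `t : {1,2,…} → ℕ`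
(indexed here by `k ↦ t (k+1)`): `U_c(t) = ∑_{k≥1} 4^{−k} exp(−t_k c)`. -/
noncomputable def distortionUB (c : ℝ) (t : ℕ → ℕ) : ℝ :=
  ∑' k : ℕ, (4 : ℝ)⁻¹ ^ (k + 1) * Real.exp (-(t (k + 1) : ℝ) * c)

/-- Lower bound on the end-to-end distortion of a transmission pattern `t : {1,2,…} → ℕ`:
`L_b(t) = (1/4) ∑_{k≥1} 4^{−k} exp(−t_k b)`. -/
noncomputable def distortionLB (b : ℝ) (t : ℕ → ℕ) : ℝ :=
  (1 / 4) * ∑' k : ℕ, (4 : ℝ)⁻¹ ^ (k + 1) * Real.exp (-(t (k + 1) : ℝ) * b)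

/-- A transmission policy of length `n`: `∑_{k≥1} t_k = n`. -/
def IsPolicy (n : ℕ) (t : ℕ → ℕ) : Prop :=
  (∑' k : ℕ, (t (k + 1) : ENNReal)) = n

/-- A policy of length `n` is efficient for `c` if it minimizes `U_c` among all policies
of length `n`. -/
def IsEfficient (c : ℝ) (n : ℕ) (t : ℕ → ℕ) : Prop :=
  IsPolicy n t ∧ ∀ t' : ℕ → ℕ, IsPolicy n t' → distortionUB c t ≤ distortionUB c t'

/-!
Let `q` be the last slot an efficient policy of length `n` transmits in. Moving one unit of time
from slot `q` to an earlier slot `j` cannot decrease `U_c`; since `z ↦ e^{-z} - e^{-(z+c)}` is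
strictly decreasing, this forces `t_j c ≥ (q - j) ln 4`, and summing over `j < q` gives
`(q - 1)² ln 4 ≤ 2 n c`. Slot `q + 1` is empty, so its term alone gives `L_b(t) ≥ 4^{-(q+2)}`,
whence `ln L_b(t) ≥ -(q + 2) ln 4 ≥ -√(2 c ln 4 · n) - 3 ln 4`.
-/

open Filter Real Finset Topology

lemma summable_inv_four_pow_mul_exp {c : ℝ} (hc : 0 ≤ c) (t : ℕ → ℕ) :
    Summable fun k : ℕ => (4 : ℝ)⁻¹ ^ (k + 1) * exp (-(t (k + 1) : ℝ) * c) := by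
  have hgeom : Summable fun k : ℕ => (4 : ℝ)⁻¹ ^ (k + 1) :=
    (summable_nat_add_iff 1).mpr (summable_geometric_of_lt_one (by norm_num) (by norm_num))
  refine hgeom.of_nonneg_of_le (fun k => by positivity) fun k => ?_
  refine mul_le_of_le_one_right (by positivity) (exp_le_one_iff.mpr ?_)
  nlinarith [(t (k + 1)).cast_nonneg (α := ℝ)]

lemma inv_four_pow_mul_exp (k s : ℕ) (c : ℝ) :
    (4 : ℝ)⁻¹ ^ (k + 1) * exp (-(s : ℝ) * c) = exp (-((k + 1 : ℕ) * log 4 + s * c)) := by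
  rw [neg_add, exp_add, exp_neg, exp_nat_mul, exp_log (by norm_num), inv_pow, neg_mul]

lemma distortionLB_le_one {b : ℝ} (hb : 0 ≤ b) (t : ℕ → ℕ) : distortionLB b t ≤ 1 := by
  have hgeom : ∑' k : ℕ, (4 : ℝ)⁻¹ ^ k = 4 / 3 := by
    rw [tsum_geometric_of_lt_one (by norm_num) (by norm_num)]; norm_num
  have hle : ∑' k : ℕ, (4 : ℝ)⁻¹ ^ (k + 1) * exp (-(t (k + 1) : ℝ) * b) ≤ 4 / 3 := by
    rw [← hgeom]
    refine (summable_inv_four_pow_mul_exp hb t).tsum_le_tsum (fun k => ?_)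
      (summable_geometric_of_lt_one (by norm_num) (by norm_num))
    calc (4 : ℝ)⁻¹ ^ (k + 1) * exp (-(t (k + 1) : ℝ) * b) ≤ (4 : ℝ)⁻¹ ^ (k + 1) :=
          mul_le_of_le_one_right (by positivity)
            (exp_le_one_iff.mpr (by nlinarith [(t (k + 1)).cast_nonneg (α := ℝ)]))
      _ ≤ (4 : ℝ)⁻¹ ^ k := pow_le_pow_of_le_one (by norm_num) (by norm_num) k.le_succ
  unfold distortionLB
  linarith

lemma inv_four_pow_le_distortionLB {b : ℝ} (hb : 0 ≤ b) {t : ℕ → ℕ} {k : ℕ}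
    (hk : t (k + 1) = 0) : (4 : ℝ)⁻¹ ^ (k + 2) ≤ distortionLB b t := by
  have hterm := (summable_inv_four_pow_mul_exp hb t).le_tsum k fun j _ => by positivity
  rw [hk, Nat.cast_zero, neg_zero, zero_mul, exp_zero, mul_one] at hterm
  unfold distortionLB
  rw [pow_succ]
  linarith

lemma sum_le_sum_of_tsum_le_tsum {β : Type*} {f g : β → ℝ} (hf : Summable f) (hg : Summable g)
    {s : Finset β} (hfg : ∀ k ∉ s, f k = g k) (h : ∑' k, f k ≤ ∑' k, g k) :
    ∑ k ∈ s, f k ≤ ∑ k ∈ s, g k := by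
  have hcompl : ∑' k : ↑(s : Set β)ᶜ, f k = ∑' k : ↑(s : Set β)ᶜ, g k :=
    tsum_congr fun k => hfg k k.2
  rw [← hf.sum_add_tsum_compl (s := s), ← hg.sum_add_tsum_compl (s := s), hcompl] at h
  linarith

lemma le_of_exp_neg_add_exp_neg_le {x y c : ℝ} (hc : 0 < c)
    (h : exp (-x) + exp (-y) ≤ exp (-(x + c)) + exp (-(y - c))) : y - c ≤ x := by
  have hfactor : exp (-x) * (1 - exp (-c)) ≤ exp (-(y - c)) * (1 - exp (-c)) := by
    have hx : exp (-(x + c)) = exp (-x) * exp (-c) := by rw [← exp_add]; ring_nf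
    have hy : exp (-y) = exp (-(y - c)) * exp (-c) := by rw [← exp_add]; ring_nf
    rw [hx, hy] at h
    linarith
  have hpos : 0 < 1 - exp (-c) := sub_pos.mpr (exp_lt_one_iff.mpr (by linarith))
  have := exp_le_exp.mp (le_of_mul_le_mul_right hfactor hpos)
  linarith

namespace IsPolicy

variable {n : ℕ} {t : ℕ → ℕ}

lemma sum_le (ht : IsPolicy n t) (s : Finset ℕ) : ∑ k ∈ s, t (k + 1) ≤ n := by
  have h := ENNReal.sum_le_tsum (f := fun k => (t (k + 1) : ENNReal)) s
  rw [ht] at h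
  exact_mod_cast h

lemma exists_last (ht : IsPolicy n t) (hn : n ≠ 0) :
    ∃ m, t (m + 1) ≠ 0 ∧ ∀ k, m < k → t (k + 1) = 0 := by
  set S := {k | t (k + 1) ≠ 0}
  have hfin : S.Finite := by
    convert ENNReal.finite_const_le_of_tsum_ne_top (ht ▸ ENNReal.natCast_ne_top n) one_ne_zero
      using 1
    ext k
    simp [S, Nat.one_le_iff_ne_zero]
  have hne : S.Nonempty := by
    by_contra hS
    have hzero : ∀ k, t (k + 1) = 0 := fun k => by
      by_contra hk
      exact hS ⟨k, hk⟩
    have hsum : (n : ENNReal) = 0 := by rw [← ht]; simp [hzero]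
    exact hn (by exact_mod_cast hsum)
  exact ⟨sSup S, Nat.sSup_mem hne hfin.bddAbove, fun k hk => by
    by_contra h
    exact absurd (le_csSup hfin.bddAbove h) (not_le.mpr hk)⟩

end IsPolicy

def moveUnit (t : ℕ → ℕ) (i j : ℕ) : ℕ → ℕ :=
  Function.update (Function.update t j (t j + 1)) i (t i - 1)

lemma isPolicy_moveUnit {n : ℕ} {t : ℕ → ℕ} (ht : IsPolicy n t) {i j : ℕ} (hij : i ≠ j)
    (hi : t (i + 1) ≠ 0) : IsPolicy n (moveUnit t (i + 1) (j + 1)) := by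
  have hk : ∀ k, moveUnit t (i + 1) (j + 1) (k + 1) + (if k = i then 1 else 0)
      = t (k + 1) + (if k = j then 1 else 0) := by
    intro k
    simp only [moveUnit, Function.update_apply, add_left_inj]
    split_ifs <;> subst_vars <;> omega
  have hsum : ∑' k, ((moveUnit t (i + 1) (j + 1) (k + 1) : ENNReal) + if k = i then 1 else 0)
      = ∑' k, ((t (k + 1) : ENNReal) + if k = j then 1 else 0) :=
    tsum_congr fun k => by exact_mod_cast hk k
  rw [ENNReal.tsum_add, ENNReal.tsum_add, tsum_ite_eq, tsum_ite_eq, ht] at hsum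
  exact WithTop.add_right_cancel ENNReal.one_ne_top hsum

lemma IsEfficient.sub_mul_log_four_le {c : ℝ} (hc : 0 < c) {n : ℕ} {t : ℕ → ℕ}
    (ht : IsEfficient c n t) {i j : ℕ} (hji : j < i) (hi : t (i + 1) ≠ 0) :
    ((i : ℝ) - j) * log 4 ≤ t (j + 1) * c := by
  set t' := moveUnit t (i + 1) (j + 1)
  have hti : t' (i + 1) = t (i + 1) - 1 := by simp [t', moveUnit]
  have htj : t' (j + 1) = t (j + 1) + 1 := by simp [t', moveUnit, hji.ne]
  have hsum := sum_le_sum_of_tsum_le_tsum (summable_inv_four_pow_mul_exp hc.le t)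
    (summable_inv_four_pow_mul_exp hc.le t') (s := {j, i}) (fun k hk => by
      simp only [mem_insert, mem_singleton, not_or] at hk
      simp [t', moveUnit, hk.1, hk.2])
    (ht.2 t' (isPolicy_moveUnit ht.1 hji.ne' hi))
  simp only [sum_pair hji.ne, inv_four_pow_mul_exp, hti, htj] at hsum
  have hexch := le_of_exp_neg_add_exp_neg_le hc (x := (j + 1 : ℕ) * log 4 + t (j + 1) * c)
    (y := (i + 1 : ℕ) * log 4 + t (i + 1) * c) (by
      convert hsum using 4 <;> push_cast [Nat.cast_sub (Nat.one_le_iff_ne_zero.mpr hi)] <;> ring)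
  have h1 : (1 : ℝ) ≤ t (i + 1) := by exact_mod_cast Nat.one_le_iff_ne_zero.mpr hi
  push_cast at hexch
  nlinarith

lemma sq_le_two_mul_sum_range_sub (m : ℕ) : (m : ℝ) ^ 2 ≤ 2 * ∑ j ∈ range m, ((m : ℝ) - j) := by
  have hgauss : ∀ m : ℕ, 2 * ∑ j ∈ range m, ((m : ℝ) - j) = m * (m + 1) := by
    intro m
    induction m with
    | zero => simp
    | succ m ih =>
      have hshift : ∑ j ∈ range m, ((m + 1 : ℕ) - (j : ℝ)) = ∑ j ∈ range m, ((m : ℝ) - j) + m := by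
        simp only [Nat.cast_succ, add_sub_right_comm _ (1 : ℝ), sum_add_distrib, sum_const,
          card_range, nsmul_eq_mul, mul_one]
      rw [sum_range_succ, hshift]
      push_cast
      linear_combination ih
  rw [hgauss]
  nlinarith [(m.cast_nonneg : (0 : ℝ) ≤ m)]

lemma IsEfficient.exists_sq_mul_log_four_le {c : ℝ} (hc : 0 < c) {n : ℕ} {t : ℕ → ℕ}
    (ht : IsEfficient c n t) (hn : n ≠ 0) :
    ∃ m : ℕ, (m : ℝ) ^ 2 * log 4 ≤ 2 * n * c ∧ t (m + 1 + 1) = 0 := by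
  obtain ⟨m, hm, hlast⟩ := ht.1.exists_last hn
  refine ⟨m, ?_, hlast (m + 1) (lt_add_one m)⟩
  have hlog4 : 0 < log 4 := log_pos (by norm_num)
  calc (m : ℝ) ^ 2 * log 4 ≤ 2 * ∑ j ∈ range m, ((m : ℝ) - j) * log 4 := by
        rw [← sum_mul, ← mul_assoc]
        exact mul_le_mul_of_nonneg_right (sq_le_two_mul_sum_range_sub m) hlog4.le
    _ ≤ 2 * ∑ j ∈ range m, (t (j + 1) : ℝ) * c := by
        refine mul_le_mul_of_nonneg_left (sum_le_sum fun j hj => ?_) zero_le_two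
        exact ht.sub_mul_log_four_le hc (mem_range.mp hj) hm
    _ = 2 * ((∑ j ∈ range m, t (j + 1) : ℕ) : ℝ) * c := by push_cast; rw [mul_assoc, sum_mul]
    _ ≤ 2 * n * c := by gcongr; exact_mod_cast ht.1.sum_le _

lemma IsEfficient.neg_le_log_distortionLB {b c : ℝ} (hb : 0 ≤ b) (hc : 0 < c) {n : ℕ}
    {t : ℕ → ℕ} (ht : IsEfficient c n t) (hn : n ≠ 0) :
    -(√n * √(2 * c * log 4) + 3 * log 4) ≤ log (distortionLB b t) := by
  obtain ⟨m, hm, hzero⟩ := ht.exists_sq_mul_log_four_le hc hn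
  have hlog4 : 0 < log 4 := log_pos (by norm_num)
  have hlogL : -((m + 3) * log 4) ≤ log (distortionLB b t) := by
    have h := log_le_log (by positivity) (inv_four_pow_le_distortionLB hb hzero)
    rw [log_pow, log_inv] at h
    push_cast at h
    linarith
  have hm' : m * log 4 ≤ √n * √(2 * c * log 4) := by
    rw [← sqrt_mul n.cast_nonneg]
    apply le_sqrt_of_sq_le
    nlinarith
  linarith

lemma le_liminf_div_sqrt {f : ℕ → ℝ} {K C : ℝ} (hf : ∀ᶠ n in atTop, f n ≤ 0)
    (hK : ∀ᶠ n : ℕ in atTop, -(√n * K + C) ≤ f n) :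
    -K ≤ liminf (fun n => f n / √n) atTop := by
  have htend : Tendsto (fun n : ℕ => -K - C / √n) atTop (𝓝 (-K)) := by
    have h := (tendsto_const_nhds (x := C)).div_atTop
      (tendsto_sqrt_atTop.comp tendsto_natCast_atTop_atTop)
    simpa using h.const_sub (-K)
  rw [← htend.liminf_eq]
  refine liminf_le_liminf ?_ htend.isBoundedUnder_ge
    (isCoboundedUnder_ge_of_eventually_le atTop (x := 0) ?_)
  · filter_upwards [hK, eventually_gt_atTop 0] with n hn hpos
    have hsqrt : 0 < √(n : ℝ) := sqrt_pos.mpr (by exact_mod_cast hpos)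
    rw [le_div_iff₀ hsqrt, sub_mul, div_mul_cancel₀ _ hsqrt.ne']
    linarith
  · filter_upwards [hf] with n hn
    exact div_nonpos_of_nonpos_of_nonneg hn (sqrt_nonneg _)

/-- Theorem 2 of the paper: along any sequence of efficient policies `t^{(n)}`,
`liminf_{n→∞} ln(L_b(t^{(n)})) / √n ≥ −√(2 c ln 4)`. -/
theorem stmt_12 (c b : ℝ) (hc : 0 < c) (hb : 0 < b)
    (t : ℕ → ℕ → ℕ) (heff : ∀ n : ℕ, 1 ≤ n → IsEfficient c n (t n)) :
    Filter.liminf (fun n : ℕ => Real.log (distortionLB b (t n)) / Real.sqrt n)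
        Filter.atTop
      ≥ -Real.sqrt (2 * c * Real.log 4) := by
  refine le_liminf_div_sqrt (C := 3 * log 4) ?_ ?_
  · filter_upwards with n
    exact log_nonpos (by unfold distortionLB; positivity) (distortionLB_le_one hb.le _)
  · filter_upwards [eventually_ge_atTop 1] with n hn
    exact (heff n hn).neg_le_log_distortionLB hb.le hc (by omega)
end

section
/- Fix a real constant c with 0 < c ≤ ln 4 and set r = ⌊ln(4)/c⌋ (so r ≥ 1). For each integer n ≥ 1 set q_n = ⌊√(2n/r + 1/4) − 1/2⌋ and let t^{(n)} : {1,2,…} → ℕ be the Aurelian pattern t^{(n)}_k = (q_n − k + 1)·r for 1 ≤ k ≤ q_n and t^{(n)}_k = 0 for k > q_n. Define U_c(t) = ∑_{k=1}^∞ 4^{−k}·exp(−t_k·c). Then limsup_{n→∞} ln( U_c(t^{(n)}) ) / √n ≤ −√(2r)·c. -/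
/-- The parameter `r = ⌊ln 4 / c⌋` of the Aurelian policy. -/
noncomputable def aurelianR (c : ℝ) : ℕ := ⌊Real.log 4 / c⌋₊

/-- The maximal transmitted index `q_n = ⌊√(2n/r + 1/4) − 1/2⌋` of the Aurelian policy. -/
noncomputable def aurelianQ (c : ℝ) (n : ℕ) : ℕ :=
  ⌊Real.sqrt (2 * n / (aurelianR c : ℝ) + 1 / 4) - 1 / 2⌋₊

/-- The Aurelian pattern: bit `k` is transmitted `(q_n − k + 1)·r` times for
`1 ≤ k ≤ q_n`, and never for `k > q_n`. -/
noncomputable def aurelian (c : ℝ) (n : ℕ) : ℕ → ℕ := fun k =>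
  if 1 ≤ k ∧ k ≤ aurelianQ c n then (aurelianQ c n - k + 1) * aurelianR c else 0

open Filter Real

lemma aux_summable (c : ℝ) (hc : 0 < c) (t : ℕ → ℕ) :
    Summable (fun k : ℕ => (4 : ℝ)⁻¹ ^ (k + 1) * Real.exp (-(t (k + 1) : ℝ) * c)) := by
  refine Summable.of_nonneg_of_le (fun k => by positivity) (fun k => ?_)
    (((summable_geometric_of_lt_one (by norm_num) (by norm_num : (4:ℝ)⁻¹ < 1)).mul_left
      (4:ℝ)⁻¹).congr (fun k => by rw [← pow_succ']))
  have : Real.exp (-(t (k + 1) : ℝ) * c) ≤ 1 := by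
    rw [Real.exp_le_one_iff]
    have : (0:ℝ) ≤ (t (k+1) : ℝ) * c := by positivity
    nlinarith
  calc (4 : ℝ)⁻¹ ^ (k + 1) * Real.exp (-(t (k + 1) : ℝ) * c)
      ≤ (4 : ℝ)⁻¹ ^ (k + 1) * 1 := by
        apply mul_le_mul_of_nonneg_left this (by positivity)
    _ = (4 : ℝ)⁻¹ ^ (k + 1) := mul_one _

lemma aux_r1 (c : ℝ) (hc : 0 < c) (hc' : c ≤ Real.log 4) : 1 ≤ aurelianR c := by
  have : (1:ℝ) ≤ Real.log 4 / c := (one_le_div hc).mpr hc'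
  exact_mod_cast Nat.le_floor (by exact_mod_cast this)

lemma aux_rc (c : ℝ) (hc : 0 < c) : (aurelianR c : ℝ) * c ≤ Real.log 4 := by
  have h4 : (0:ℝ) ≤ Real.log 4 := Real.log_nonneg (by norm_num)
  have := Nat.floor_le (div_nonneg h4 hc.le)
  calc (aurelianR c : ℝ) * c ≤ (Real.log 4 / c) * c := by
        apply mul_le_mul_of_nonneg_right this hc.le
    _ = Real.log 4 := by field_simp

lemma aux_pow_le (c : ℝ) (hc : 0 < c) (m : ℕ) :
    (4 : ℝ)⁻¹ ^ m ≤ Real.exp (-(m : ℝ) * ((aurelianR c : ℝ) * c)) := by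
  have h1 : (4:ℝ)⁻¹ = Real.exp (-Real.log 4) := by
    rw [Real.exp_neg, Real.exp_log (by norm_num)]
  rw [h1, ← Real.exp_nat_mul, Real.exp_le_exp]
  have := aux_rc c hc
  have hm : (0:ℝ) ≤ (m:ℝ) := Nat.cast_nonneg m
  nlinarith

lemma aux_U_le (c : ℝ) (hc : 0 < c) (hc' : c ≤ Real.log 4) (n : ℕ) :
    distortionUB c (aurelian c n) ≤
      ((aurelianQ c n : ℝ) + 1) *
        Real.exp (-(aurelianQ c n : ℝ) * ((aurelianR c : ℝ) * c)) := by
  set q := aurelianQ c n with hq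
  set r := aurelianR c with hr
  set E := Real.exp (-(q : ℝ) * ((r : ℝ) * c)) with hE
  have hsum := aux_summable c hc (aurelian c n)
  rw [distortionUB, ← Summable.sum_add_tsum_nat_add q hsum]
  have hmain : ∑ k ∈ Finset.range q, (4 : ℝ)⁻¹ ^ (k + 1) *
      Real.exp (-(aurelian c n (k + 1) : ℝ) * c) ≤ (q : ℝ) * E := by
    have : ∀ k ∈ Finset.range q, (4 : ℝ)⁻¹ ^ (k + 1) *
        Real.exp (-(aurelian c n (k + 1) : ℝ) * c) ≤ E := by
      intro k hk
      have hk' : k < q := Finset.mem_range.mp hk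
      have ht : aurelian c n (k+1) = (q - k) * r := by
        rw [aurelian]
        simp only [← hq, ← hr]
        rw [if_pos ⟨Nat.le_add_left 1 k, hk'⟩]
        congr 1
        omega
      rw [ht]
      calc (4 : ℝ)⁻¹ ^ (k + 1) * Real.exp (-(((q - k) * r : ℕ) : ℝ) * c)
          ≤ Real.exp (-((k+1 : ℕ) : ℝ) * ((r:ℝ) * c)) *
            Real.exp (-(((q - k) * r : ℕ) : ℝ) * c) := by
            apply mul_le_mul_of_nonneg_right (aux_pow_le c hc (k+1)) (Real.exp_pos _).le
        _ ≤ E := by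
            rw [← Real.exp_add, hE, Real.exp_le_exp]
            have hcast : (((q - k) * r : ℕ) : ℝ) = ((q:ℝ) - k) * r := by
              push_cast [Nat.cast_sub hk'.le]; ring
            rw [hcast]
            push_cast
            have : (0:ℝ) ≤ (r:ℝ) * c := by positivity
            nlinarith
    calc ∑ k ∈ Finset.range q, (4 : ℝ)⁻¹ ^ (k + 1) *
        Real.exp (-(aurelian c n (k + 1) : ℝ) * c)
        ≤ ∑ _k ∈ Finset.range q, E := Finset.sum_le_sum this
      _ = (q : ℝ) * E := by rw [Finset.sum_const, Finset.card_range]; simp [nsmul_eq_mul]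
  have htail : ∑' k : ℕ, (4 : ℝ)⁻¹ ^ (k + q + 1) *
      Real.exp (-(aurelian c n (k + q + 1) : ℝ) * c) ≤ E := by
    have heq : ∀ k : ℕ, (4 : ℝ)⁻¹ ^ (k + q + 1) *
        Real.exp (-(aurelian c n (k + q + 1) : ℝ) * c)
        = (4:ℝ)⁻¹ ^ k * ((4:ℝ)⁻¹ ^ (q+1)) := by
      intro k
      have : aurelian c n (k + q + 1) = 0 := by
        rw [aurelian, if_neg]
        rintro ⟨-, h2⟩
        omega
      rw [this]
      simp [pow_add, Real.exp_zero]
      ring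
    calc ∑' k : ℕ, (4 : ℝ)⁻¹ ^ (k + q + 1) *
        Real.exp (-(aurelian c n (k + q + 1) : ℝ) * c)
        = ∑' k : ℕ, (4:ℝ)⁻¹ ^ k * ((4:ℝ)⁻¹ ^ (q+1)) := by exact tsum_congr heq
      _ = (1 - (4:ℝ)⁻¹)⁻¹ * ((4:ℝ)⁻¹ ^ (q+1)) := by
          rw [tsum_mul_right, tsum_geometric_of_lt_one (by norm_num) (by norm_num)]
      _ ≤ (2:ℝ) * ((4:ℝ)⁻¹ ^ (q+1)) := by
          apply mul_le_mul_of_nonneg_right (by norm_num) (by positivity)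
      _ ≤ (4:ℝ) * ((4:ℝ)⁻¹ ^ (q+1)) := by
          apply mul_le_mul_of_nonneg_right (by norm_num) (by positivity)
      _ = (4:ℝ)⁻¹ ^ q := by rw [pow_succ]; ring
      _ ≤ E := aux_pow_le c hc q
  have : ((q : ℝ) + 1) * E = (q:ℝ) * E + E := by ring
  rw [this]
  gcongr

lemma aux_U_ge (c : ℝ) (hc : 0 < c) (n : ℕ) :
    (4 : ℝ)⁻¹ ^ (aurelianQ c n + 1) ≤ distortionUB c (aurelian c n) := by
  set q := aurelianQ c n with hq
  have hsum := aux_summable c hc (aurelian c n)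
  have h0 : aurelian c n (q + 1) = 0 := by
    rw [aurelian, if_neg]; rintro ⟨-, h2⟩; omega
  have := Summable.le_tsum hsum q (fun j _ => by positivity)
  rw [h0] at this
  rw [distortionUB]
  simpa [Real.exp_zero] using this

lemma aux_half_le (c : ℝ) (n : ℕ) :
    (1/2 : ℝ) ≤ Real.sqrt (2 * n / (aurelianR c : ℝ) + 1 / 4) := by
  rw [show (1/2:ℝ) = Real.sqrt (1/4) by
    rw [show (1/4:ℝ) = (1/2)^2 by norm_num, Real.sqrt_sq (by norm_num)]]
  apply Real.sqrt_le_sqrt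
  have : (0:ℝ) ≤ 2 * n / (aurelianR c : ℝ) := by positivity
  linarith

lemma aux_q_le (c : ℝ) (hc : 0 < c) (hc' : c ≤ Real.log 4) (n : ℕ) :
    (aurelianQ c n : ℝ) ≤ Real.sqrt (2 * n) := by
  have hr1 : 1 ≤ aurelianR c := aux_r1 c hc hc'
  have hr0 : (1:ℝ) ≤ (aurelianR c : ℝ) := by exact_mod_cast hr1
  have hhalf := aux_half_le c n
  have h1 : (aurelianQ c n : ℝ) ≤ Real.sqrt (2 * n / (aurelianR c : ℝ) + 1 / 4) - 1/2 :=
    Nat.floor_le (by linarith)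
  have h2 : Real.sqrt (2 * n / (aurelianR c : ℝ) + 1 / 4)
      ≤ Real.sqrt (2 * n / (aurelianR c : ℝ)) + 1/2 := by
    rw [Real.sqrt_le_iff]
    constructor
    · positivity
    · have h3 := Real.sq_sqrt (show (0:ℝ) ≤ 2 * n / (aurelianR c : ℝ) by positivity)
      have h4 := Real.sqrt_nonneg (2 * n / (aurelianR c : ℝ))
      nlinarith
  have h5 : Real.sqrt (2 * n / (aurelianR c : ℝ)) ≤ Real.sqrt (2 * n) := by
    apply Real.sqrt_le_sqrt
    apply div_le_self (by positivity) hr0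
  linarith

lemma aux_q_ge (c : ℝ) (n : ℕ) :
    Real.sqrt (2 * n / (aurelianR c : ℝ)) - 3/2 ≤ (aurelianQ c n : ℝ) := by
  have h1 : Real.sqrt (2 * n / (aurelianR c : ℝ) + 1 / 4) - 1/2 - 1 < (aurelianQ c n : ℝ) :=
    Nat.sub_one_lt_floor _
  have h2 : Real.sqrt (2 * n / (aurelianR c : ℝ))
      ≤ Real.sqrt (2 * n / (aurelianR c : ℝ) + 1 / 4) := by
    apply Real.sqrt_le_sqrt; linarith
  linarith

lemma aux_key_identity (c : ℝ) (hc : 0 < c) (hc' : c ≤ Real.log 4) (n : ℕ) :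
    (aurelianR c : ℝ) * Real.sqrt (2 * n / (aurelianR c : ℝ))
      = Real.sqrt (2 * (aurelianR c : ℝ)) * Real.sqrt n := by
  have hr1 : 1 ≤ aurelianR c := aux_r1 c hc hc'
  have hr0 : (0:ℝ) < (aurelianR c : ℝ) := by exact_mod_cast hr1
  set R := (aurelianR c : ℝ)
  have h1 : R * Real.sqrt (2 * n / R) = Real.sqrt (R^2 * (2 * n / R)) := by
    rw [Real.sqrt_mul (by positivity), Real.sqrt_sq hr0.le]
  have h2 : R^2 * (2 * n / R) = (2 * R) * n := by field_simp
  rw [h1, h2, Real.sqrt_mul (by positivity)]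

lemma aux_sqrt2 : Real.sqrt 2 ≤ 2 := by
  nlinarith [Real.sq_sqrt (by norm_num : (0:ℝ) ≤ 2), Real.sqrt_nonneg 2]

lemma aux_sqrt3 : Real.sqrt 3 ≤ 2 := by
  nlinarith [Real.sq_sqrt (by norm_num : (0:ℝ) ≤ 3), Real.sqrt_nonneg 3]

lemma aux_q3 (c : ℝ) (hc : 0 < c) (hc' : c ≤ Real.log 4) (n : ℕ) (hn1 : (1:ℝ) ≤ (n:ℝ)) :
    (aurelianQ c n : ℝ) + 1 ≤ 3 * Real.sqrt n := by
  have hsn1 : (1:ℝ) ≤ Real.sqrt n := Real.one_le_sqrt.mpr hn1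
  have h1 := aux_q_le c hc hc' n
  have h2 : Real.sqrt (2 * n) ≤ 2 * Real.sqrt n := by
    rw [Real.sqrt_mul (by norm_num : (0:ℝ) ≤ 2)]
    nlinarith [aux_sqrt2, Real.sqrt_nonneg (n:ℝ)]
  linarith

lemma aux_div (Bv rc s x : ℝ) (hrc : 0 ≤ rc) (hs : 1 ≤ s)
    (hx : x ≤ 4 * s - Bv * (s * s) + 2 * rc) :
    x / (s * s) ≤ -Bv + (4 + 2 * rc) / s := by
  have hs0 : (0:ℝ) < s := lt_of_lt_of_le one_pos hs
  have hss0 : (0:ℝ) < s * s := by positivity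
  rw [div_le_iff₀ hss0] at *
  have hKexp : (-Bv + (4 + 2 * rc) / s) * (s * s) = -Bv * (s * s) + (4 + 2 * rc) * s := by
    field_simp
  rw [hKexp]
  nlinarith

lemma aux_alg2 (a b L sn : ℝ) (h1 : -(a * L) ≤ b) (h2 : a ≤ 3 * sn) (hL : 0 ≤ L) :
    -3 * L * sn ≤ b := by nlinarith


set_option maxHeartbeats 1000000 in
/-- Theorem 3 of the paper: along the Aurelian policy,
`limsup_{n→∞} ln(U_c(t^{(n)})) / √n ≤ −√(2r)·c`. -/
theorem stmt_15 (c : ℝ) (hc : 0 < c) (hc' : c ≤ Real.log 4) :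
    Filter.limsup (fun n : ℕ => Real.log (distortionUB c (aurelian c n)) / Real.sqrt n)
        Filter.atTop
      ≤ -Real.sqrt (2 * aurelianR c) * c := by
  have hr1 : 1 ≤ aurelianR c := aux_r1 c hc hc'
  have hr0 : (0:ℝ) < (aurelianR c : ℝ) := by exact_mod_cast hr1
  set R := (aurelianR c : ℝ) with hR
  set B := Real.sqrt (2 * R) * c with hBdef
  have hrc0 : (0:ℝ) ≤ R * c := by positivity
  set f := fun n : ℕ => Real.log (distortionUB c (aurelian c n)) / Real.sqrt n with hf
  set g := fun n : ℕ => -B + (4 + 2 * (R * c)) / Real.sqrt (Real.sqrt n) with hg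
  have hsqrt_top : Filter.Tendsto Real.sqrt Filter.atTop Filter.atTop := by
    apply Filter.tendsto_atTop_atTop.mpr
    intro b
    exact ⟨b^2, fun a ha => Real.le_sqrt_of_sq_le ha⟩
  have hss_top : Filter.Tendsto (fun n : ℕ => Real.sqrt (Real.sqrt n)) Filter.atTop
      Filter.atTop := hsqrt_top.comp (hsqrt_top.comp tendsto_natCast_atTop_atTop)
  have hgtend : Filter.Tendsto g Filter.atTop (nhds (-B)) := by
    have h2 : Filter.Tendsto (fun n : ℕ => (4 + 2 * (R * c)) / Real.sqrt (Real.sqrt n))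
        Filter.atTop (nhds 0) := Filter.Tendsto.div_atTop tendsto_const_nhds hss_top
    simpa using tendsto_const_nhds.add h2
  -- eventual upper bound
  have hfg : ∀ᶠ n in Filter.atTop, f n ≤ g n := by
    filter_upwards [Filter.eventually_ge_atTop 1] with n hn
    have hn1 : (1:ℝ) ≤ (n:ℝ) := by exact_mod_cast hn
    have hsn1 : (1:ℝ) ≤ Real.sqrt n := Real.one_le_sqrt.mpr hn1
    have hs1 : (1:ℝ) ≤ Real.sqrt (Real.sqrt n) := Real.one_le_sqrt.mpr hsn1
    have hss : Real.sqrt (Real.sqrt n) * Real.sqrt (Real.sqrt n) = Real.sqrt n :=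
      Real.mul_self_sqrt (Real.sqrt_nonneg _)
    -- positivity of U
    have hUge := aux_U_ge c hc n
    have hUpos : 0 < distortionUB c (aurelian c n) :=
      lt_of_lt_of_le (by positivity) hUge
    -- log U ≤ log (q+1) - q * (R*c)
    have hUle := aux_U_le c hc hc' n
    have hlog : Real.log (distortionUB c (aurelian c n))
        ≤ Real.log ((aurelianQ c n : ℝ) + 1) - (aurelianQ c n : ℝ) * (R * c) := by
      have h1 := Real.log_le_log hUpos hUle
      rw [Real.log_mul (by positivity) (Real.exp_ne_zero _), Real.log_exp] at h1
      linarith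
    -- log (q+1) ≤ 4 * s
    have hq3 := aux_q3 c hc hc' n hn1
    have hlogq : Real.log ((aurelianQ c n : ℝ) + 1) ≤ 4 * Real.sqrt (Real.sqrt n) := by
      have hq1 : (0:ℝ) < (aurelianQ c n : ℝ) + 1 := by positivity
      have h1 : Real.log ((aurelianQ c n : ℝ) + 1)
          = 2 * Real.log (Real.sqrt ((aurelianQ c n : ℝ) + 1)) := by
        rw [Real.log_sqrt hq1.le]; ring
      have h2 : Real.log (Real.sqrt ((aurelianQ c n : ℝ) + 1))
          ≤ Real.sqrt ((aurelianQ c n : ℝ) + 1) := by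
        have := Real.log_le_sub_one_of_pos (Real.sqrt_pos.mpr hq1)
        linarith
      have h3 : Real.sqrt ((aurelianQ c n : ℝ) + 1) ≤ 2 * Real.sqrt (Real.sqrt n) := by
        calc Real.sqrt ((aurelianQ c n : ℝ) + 1) ≤ Real.sqrt (3 * Real.sqrt n) :=
              Real.sqrt_le_sqrt hq3
          _ = Real.sqrt 3 * Real.sqrt (Real.sqrt n) := by
              rw [Real.sqrt_mul (by norm_num : (0:ℝ) ≤ 3)]
          _ ≤ 2 * Real.sqrt (Real.sqrt n) := by
              nlinarith [aux_sqrt3, Real.sqrt_nonneg (Real.sqrt (n:ℝ))]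
      linarith
    -- -(q)*(R*c) ≤ -B * √n + 2*(R*c)
    have hqrc : -((aurelianQ c n : ℝ) * (R * c)) ≤ -(B * Real.sqrt n) + 2 * (R * c) := by
      have h1 := aux_q_ge c n
      have h2 := aux_key_identity c hc hc' n
      have h3 : (Real.sqrt (2 * n / R) - 3/2) * (R * c) ≤ (aurelianQ c n : ℝ) * (R * c) :=
        mul_le_mul_of_nonneg_right h1 hrc0
      have h4 : Real.sqrt (2 * n / R) * (R * c) = B * Real.sqrt n := by
        rw [hBdef]; nlinarith [h2]
      nlinarith
    -- combine
    have hcomb : Real.log (distortionUB c (aurelian c n))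
        ≤ 4 * Real.sqrt (Real.sqrt n) - B * (Real.sqrt (Real.sqrt n) * Real.sqrt (Real.sqrt n))
          + 2 * (R * c) := by
      rw [hss]; linarith
    have := aux_div B (R * c) (Real.sqrt (Real.sqrt n))
      (Real.log (distortionUB c (aurelian c n))) hrc0 hs1 hcomb
    rwa [hss] at this
  have hlb : ∀ᶠ n in Filter.atTop, -3 * Real.log 4 ≤ f n := by
    filter_upwards [Filter.eventually_ge_atTop 1] with n hn
    have hn1 : (1:ℝ) ≤ (n:ℝ) := by exact_mod_cast hn
    have hsn1 : (1:ℝ) ≤ Real.sqrt n := Real.one_le_sqrt.mpr hn1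
    have hsn0 : (0:ℝ) < Real.sqrt n := lt_of_lt_of_le one_pos hsn1
    have hUge := aux_U_ge c hc n
    have hUpos : 0 < distortionUB c (aurelian c n) := lt_of_lt_of_le (by positivity) hUge
    have hlogU : -((((aurelianQ c n : ℝ) + 1)) * Real.log 4)
        ≤ Real.log (distortionUB c (aurelian c n)) := by
      have h1 := Real.log_le_log (by positivity : (0:ℝ) < (4:ℝ)⁻¹ ^ (aurelianQ c n + 1)) hUge
      rw [Real.log_pow, Real.log_inv] at h1
      push_cast at h1 ⊢
      linarith
    have hq3 := aux_q3 c hc hc' n hn1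
    have hlog4 : (0:ℝ) ≤ Real.log 4 := Real.log_nonneg (by norm_num)
    show -3 * Real.log 4 ≤ Real.log (distortionUB c (aurelian c n)) / Real.sqrt n
    rw [le_div_iff₀ hsn0]
    have := aux_alg2 ((aurelianQ c n : ℝ) + 1) (Real.log (distortionUB c (aurelian c n)))
      (Real.log 4) (Real.sqrt n) hlogU hq3 hlog4
    linarith [this]
  have hcob : Filter.IsCoboundedUnder (· ≤ ·) Filter.atTop f :=
    Filter.isCoboundedUnder_le_of_eventually_le Filter.atTop hlb
  calc Filter.limsup f Filter.atTop ≤ Filter.limsup g Filter.atTop :=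
        Filter.limsup_le_limsup hfg hcob hgtend.isBoundedUnder_le
    _ = -B := hgtend.limsup_eq
    _ = -Real.sqrt (2 * aurelianR c) * c := by rw [hBdef]; push_cast; ring
end
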